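/- Let n ≥ 2 and let I = ⟨x_1x_2, x_2x_3, …, x_{n−1}x_n⟩ ⊂ K[x_1,…,x_n] be the edge ideal of the path P_n over a field K. Then v(I^k) = 2k − 1 for all integers k ≥ 1 with k ≥ ⌊n/2⌋ − 1. -/

import Mathlib

open MvPolynomial

/-- A graded (homogeneous) ideal: one generated by homogeneous polynomials. -/
def IsHomogeneousIdeal {K : Type*} [Field K] {n : ℕ}
    (I : Ideal (MvPolynomial (Fin n) K)) : Prop :=
  ∃ G : Set (MvPolynomial (Fin n) K),
    (∀ f ∈ G, ∃ d, f.IsHomogeneous d) ∧ I = Ideal.span G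

/-- `Ass(I)`: the associated primes of `S/I`. -/
def Ass {K : Type*} [Field K] {n : ℕ} (I : Ideal (MvPolynomial (Fin n) K)) :
    Set (Ideal (MvPolynomial (Fin n) K)) :=
  associatedPrimes (MvPolynomial (Fin n) K) (MvPolynomial (Fin n) K ⧸ I)

/-- The local v-number `v_p(I)`. -/
noncomputable def vNumberAt {K : Type*} [Field K] {n : ℕ}
    (I p : Ideal (MvPolynomial (Fin n) K)) : ℕ :=
  sInf {d | ∃ f : MvPolynomial (Fin n) K, f.IsHomogeneous d ∧
    I.colon (Ideal.span {f}) = p}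

/-- The v-number `v(I)`. -/
noncomputable def vNumber {K : Type*} [Field K] {n : ℕ}
    (I : Ideal (MvPolynomial (Fin n) K)) : ℕ :=
  sInf {d | ∃ f : MvPolynomial (Fin n) K, ∃ p ∈ Ass I, f.IsHomogeneous d ∧
    I.colon (Ideal.span {f}) = p}

/-- `α(J)`: the least degree of a nonzero element of `J`. -/
noncomputable def alphaNum {K : Type*} [Field K] {n : ℕ}
    (J : Ideal (MvPolynomial (Fin n) K)) : ℕ :=
  sInf {d | ∃ f ∈ J, f ≠ 0 ∧ f.totalDegree = d}

/-- `c(I) = max{α(p) : p ∈ Ass(I)}`. -/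
noncomputable def cNum {K : Type*} [Field K] {n : ℕ}
    (I : Ideal (MvPolynomial (Fin n) K)) : ℕ :=
  sSup (alphaNum '' Ass I)

/-!
Every generator `x_i x_{i+1}` of `I = I(P_n)` (indices from `0`) has degree `2` and contains exactly
one odd-indexed variable, so every monomial of `I^k` has degree `≥ 2k` and odd weight `≥ k`.

Lower bound: if `(I^k : f) = p` is prime, then `p ∋ x_0 x_1`, so `x_0 f` or `x_1 f` is a nonzero
element of `I^k`, and `deg f ≥ 2k - 1`.

Upper bound: take `f = (x_0 x_1)^(k-1-m) x_a x_{a+1} ⋯ x_{a+2m}` with `(a, m) = (0, 0)` if `n ≤ 3`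
and `(a, m) = (2, ⌊n/2⌋ - 2)` otherwise. It has degree `2k - 1` and odd weight `k - 1`, so no
polynomial with a monomial free of odd variables lies in `(I^k : f)`; and for odd `j` the variable
`x_j` cuts the segment into two segments of even length, so `x_j f ∈ I^k`. Hence `(I^k : f)` is the
prime ideal `(x_j : j odd)`.
-/

section WeightOrder

variable {σ R : Type*}

noncomputable def weightOrderIdeal [CommSemiring R] (w : σ → ℕ) (c : ℕ) :
    Ideal (MvPolynomial σ R) :=
  Ideal.span ((fun μ => monomial μ 1) '' {μ | c ≤ Finsupp.weight w μ})

variable [CommSemiring R] {w : σ → ℕ}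

theorem mem_weightOrderIdeal {c : ℕ} {p : MvPolynomial σ R} :
    p ∈ weightOrderIdeal w c ↔ ∀ μ ∈ p.support, c ≤ Finsupp.weight w μ := by
  rw [weightOrderIdeal, mem_ideal_span_monomial_image]
  refine forall₂_congr fun μ _ => ⟨fun ⟨ν, hν, hle⟩ => hν.trans ?_, fun h => ⟨μ, h, le_rfl⟩⟩
  obtain ⟨δ, rfl⟩ := le_iff_exists_add.mp hle
  simp

theorem weightOrderIdeal_mul_le (a b : ℕ) :
    weightOrderIdeal (R := R) w a * weightOrderIdeal w b ≤ weightOrderIdeal w (a + b) := by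
  rw [weightOrderIdeal, weightOrderIdeal, Ideal.span_mul_span', Ideal.span_le]
  rintro _ ⟨_, ⟨μ, hμ, rfl⟩, _, ⟨ν, hν, rfl⟩, rfl⟩
  refine Ideal.subset_span ⟨μ + ν, ?_, by simp [monomial_mul]⟩
  simp only [Set.mem_ofPred_eq, map_add] at *
  omega

theorem pow_le_weightOrderIdeal {J : Ideal (MvPolynomial σ R)} {c : ℕ}
    (hJ : J ≤ weightOrderIdeal w c) (k : ℕ) : J ^ k ≤ weightOrderIdeal w (c * k) := by
  induction k with
  | zero =>
    rw [pow_zero, Ideal.one_eq_top, top_le_iff, Ideal.eq_top_iff_one]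
    exact mem_weightOrderIdeal.mpr fun _ _ => Nat.zero_le _
  | succ k ih =>
    rw [pow_succ, mul_add_one]
    exact (Ideal.mul_mono ih hJ).trans (weightOrderIdeal_mul_le _ _)

theorem colon_monomial_eq_span_X_image {J : Ideal (MvPolynomial σ R)} {s : Set σ} {k : ℕ}
    {μ : σ →₀ ℕ} (hw : ∀ i ∉ s, w i = 0) (hJ : J ≤ weightOrderIdeal w k)
    (hμ : Finsupp.weight w μ < k) (hX : ∀ i ∈ s, X i * monomial μ 1 ∈ J) :
    J.colon (Ideal.span {monomial μ (1 : R)}) = Ideal.span (X '' s) := by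
  refine le_antisymm (fun g hg => ?_) (Ideal.span_le.mpr ?_)
  · rw [Ideal.mem_colon_span_singleton] at hg
    by_contra hgs
    rw [mem_ideal_span_X_image] at hgs
    push Not at hgs
    obtain ⟨ν, hν, hνs⟩ := hgs
    have hν0 : Finsupp.weight w ν = 0 := by
      rw [Finsupp.weight_apply]
      refine Finset.sum_eq_zero fun i _ => ?_
      by_cases hi : i ∈ s
      · simp [hνs i hi]
      · simp [hw i hi]
    have := mem_weightOrderIdeal.mp (hJ hg) (ν + μ)
      (by rwa [mem_support_iff, coeff_mul_monomial, mul_one, ← mem_support_iff])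
    rw [map_add, hν0] at this
    omega
  · rintro _ ⟨i, hi, rfl⟩
    exact Ideal.mem_colon_span_singleton.mpr (hX i hi)

end WeightOrder

theorem isPrime_span_X_image {σ R : Type*} [CommRing R] [IsDomain R] (s : Set σ) :
    (Ideal.span (X '' s : Set (MvPolynomial σ R))).IsPrime := by
  classical
  let φ : MvPolynomial σ R →ₐ[R] MvPolynomial σ R := aeval fun i => if i ∈ s then 0 else X i
  have hφ : ∀ g, g - φ g ∈ Ideal.span (X '' s) := by
    intro g
    induction g using MvPolynomial.induction_on with
    | C a => simp [φ]
    | add p q hp hq => simpa [add_sub_add_comm] using Ideal.add_mem _ hp hq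
    | mul_X p i hp =>
      by_cases hi : i ∈ s
      · simpa [φ, hi] using Ideal.mul_mem_left _ p (Ideal.subset_span (Set.mem_image_of_mem X hi))
      · simpa [φ, hi, sub_mul] using Ideal.mul_mem_right (X i) _ hp
  have hker : RingHom.ker φ = Ideal.span (X '' s) := by
    refine le_antisymm (fun g hg => ?_) (Ideal.span_le.mpr ?_)
    · simpa [(RingHom.mem_ker).mp hg] using hφ g
    · rintro _ ⟨i, hi, rfl⟩
      simp [φ, hi]
  exact hker ▸ RingHom.ker_isPrime φ

theorem le_add_one_of_X_mul_mem {σ R : Type*} [CommRing R] [IsDomain R]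
    {J : Ideal (MvPolynomial σ R)} {e d : ℕ} (hJ : J ≤ weightOrderIdeal 1 e)
    {f : MvPolynomial σ R} (hf : f.IsHomogeneous d) (hf0 : f ≠ 0) {i : σ}
    (hXf : X i * f ∈ J) : e ≤ d + 1 := by
  obtain ⟨μ, hμ⟩ := exists_coeff_ne_zero (mul_ne_zero (X_ne_zero i) hf0)
  calc e ≤ Finsupp.weight 1 μ := mem_weightOrderIdeal.mp (hJ hXf) μ (mem_support_iff.mpr hμ)
    _ = d + 1 := by rw [((isHomogeneous_X R i).mul hf) hμ, add_comm]

theorem mem_Ass_of_colon_eq {K : Type*} [Field K] {n : ℕ} {J P : Ideal (MvPolynomial (Fin n) K)}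
    {f : MvPolynomial (Fin n) K} (hP : P.IsPrime) (h : J.colon (Ideal.span {f}) = P) :
    P ∈ Ass J := by
  refine ⟨hP, Ideal.Quotient.mk J f, ?_⟩
  have : (⊥ : Submodule _ (MvPolynomial (Fin n) K ⧸ J)).colon {Ideal.Quotient.mk J f} = P := by
    ext g
    rw [Submodule.mem_colon_singleton, Submodule.mem_bot, ← h, Ideal.mem_colon_span_singleton,
      ← Ideal.Quotient.eq_zero_iff_mem]
    rfl
  rw [this, hP.radical]

section PathIdeal

variable {R : Type*} [CommSemiring R] {n : ℕ}

noncomputable def pathIdeal (R : Type*) [CommSemiring R] (n : ℕ) :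
    Ideal (MvPolynomial (Fin n) R) :=
  Ideal.span {f | ∃ (i : ℕ) (h : i + 1 < n),
    f = (X (⟨i, Nat.lt_of_succ_lt h⟩ : Fin n) : MvPolynomial (Fin n) R) * X (⟨i + 1, h⟩ : Fin n)}

/-- The variable `x_i`; an out-of-range index gives `0`, so that `x_i x_{i+1} ∈ I(P_n)` for
every `i`. -/
noncomputable def pathVar (R : Type*) [CommSemiring R] (n i : ℕ) : MvPolynomial (Fin n) R :=
  if h : i < n then X ⟨i, h⟩ else 0

noncomputable def pathMonomial (R : Type*) [CommSemiring R] (n a l : ℕ) :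
    MvPolynomial (Fin n) R :=
  ∏ j ∈ Finset.range l, pathVar R n (a + j)

theorem pathVar_mul_pathVar_succ_mem (i : ℕ) :
    pathVar R n i * pathVar R n (i + 1) ∈ pathIdeal R n := by
  unfold pathVar
  split_ifs with h₁ h₂
  · exact Ideal.subset_span ⟨i, h₂, rfl⟩
  all_goals simp

theorem pathIdeal_le_weightOrderIdeal {w : Fin n → ℕ} {c : ℕ}
    (hw : ∀ i (h : i + 1 < n), c ≤ w ⟨i, Nat.lt_of_succ_lt h⟩ + w ⟨i + 1, h⟩) :
    pathIdeal R n ≤ weightOrderIdeal w c := by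
  refine Ideal.span_le.mpr ?_
  rintro _ ⟨i, h, rfl⟩
  refine Ideal.subset_span
    ⟨Finsupp.single ⟨i, Nat.lt_of_succ_lt h⟩ 1 + Finsupp.single ⟨i + 1, h⟩ 1, ?_,
      by simp [X, monomial_mul]⟩
  simpa only [Set.mem_ofPred_eq, map_add, Finsupp.weight_single, one_smul] using hw i h

theorem pathMonomial_add (a l₁ l₂ : ℕ) :
    pathMonomial R n a (l₁ + l₂) = pathMonomial R n a l₁ * pathMonomial R n (a + l₁) l₂ := by
  simp [pathMonomial, Finset.prod_range_add, add_assoc]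

theorem pathMonomial_succ (a l : ℕ) :
    pathMonomial R n a (l + 1) = pathMonomial R n a l * pathVar R n (a + l) :=
  Finset.prod_range_succ _ _

theorem pathMonomial_succ' (a l : ℕ) :
    pathMonomial R n a (l + 1) = pathVar R n a * pathMonomial R n (a + 1) l := by
  simp [pathMonomial, Finset.prod_range_succ', mul_comm, add_assoc, add_comm 1]

theorem pathMonomial_two_mul_mem_pow (a m : ℕ) :
    pathMonomial R n a (2 * m) ∈ pathIdeal R n ^ m := by
  induction m generalizing a with
  | zero => simp [pathMonomial]
  | succ m ih =>
    rw [show 2 * (m + 1) = 2 + 2 * m by ring, pathMonomial_add, pow_succ']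
    refine Ideal.mul_mem_mul ?_ (ih _)
    simpa [pathMonomial, Finset.prod_range_succ] using
      pathVar_mul_pathVar_succ_mem (R := R) (n := n) a

/-- Multiplying a segment of odd length by a variable at an odd offset splits it into two
segments of even length. -/
theorem pathVar_mul_pathMonomial_mem_pow {a m s : ℕ} (hs : s ≤ m) :
    pathVar R n (a + 2 * s + 1) * pathMonomial R n a (2 * m + 1) ∈ pathIdeal R n ^ (m + 1) := by
  have hsplit := pathMonomial_add (R := R) (n := n) a (2 * s + 1) (2 * (m - s))
  rw [show 2 * s + 1 + 2 * (m - s) = 2 * m + 1 by omega] at hsplit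
  have hextend : pathVar R n (a + 2 * s + 1) * pathMonomial R n a (2 * s + 1) =
      pathMonomial R n a (2 * (s + 1)) := by
    rw [show 2 * (s + 1) = 2 * s + 1 + 1 by ring, pathMonomial_succ a (2 * s + 1), mul_comm,
      add_assoc]
  rw [hsplit, ← mul_assoc, hextend, show m + 1 = (s + 1) + (m - s) by omega, pow_add]
  exact Ideal.mul_mem_mul (pathMonomial_two_mul_mem_pow a (s + 1))
    (pathMonomial_two_mul_mem_pow _ _)

theorem pathVar_mul_pathMonomial_mem_pow_of_odd {a m j : ℕ} (ha : a % 2 = 0) (ha₂ : a ≤ 2)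
    (hj : j % 2 = 1) (hjm : j ≤ a + 2 * m + 1) :
    pathVar R n j * pathMonomial R n a (2 * m + 1) ∈ pathIdeal R n ^ (m + 1) := by
  by_cases hja : j + 1 = a
  · rw [← hja, ← pathMonomial_succ', show 2 * m + 1 + 1 = 2 * (m + 1) by ring]
    exact pathMonomial_two_mul_mem_pow _ _
  · obtain ⟨s, rfl⟩ : ∃ s, j = a + 2 * s + 1 := ⟨(j - a) / 2, by omega⟩
    exact pathVar_mul_pathMonomial_mem_pow (by omega)

theorem exists_pathMonomial_eq_monomial {a l : ℕ} (h : a + l ≤ n) :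
    ∃ μ, pathMonomial R n a l = monomial μ 1 ∧ μ.degree = l ∧
      Finsupp.weight (fun j : Fin n => j.val % 2) μ = (a + l) / 2 - a / 2 := by
  induction l with
  | zero => exact ⟨0, by simp [pathMonomial], by simp, by simp⟩
  | succ l ih =>
    obtain ⟨μ, hμ, hdeg, hwt⟩ := ih (by omega)
    refine ⟨μ + Finsupp.single ⟨a + l, by omega⟩ 1, ?_, ?_, ?_⟩
    · rw [pathMonomial_succ, hμ, pathVar, dif_pos (by omega), X, monomial_mul, one_mul]
    · simp [hdeg]
    · simp only [map_add, hwt, Finsupp.weight_single, one_smul]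
      omega

end PathIdeal

section VNumber

variable {K : Type*} [Field K] {n : ℕ}

theorem two_mul_le_of_colon_pathIdeal_pow_eq (hn : 2 ≤ n) {k d : ℕ} {f : MvPolynomial (Fin n) K}
    {p : Ideal (MvPolynomial (Fin n) K)} (hp : p.IsPrime) (hf : f.IsHomogeneous d)
    (hfp : (pathIdeal K n ^ k).colon (Ideal.span {f}) = p) : 2 * k ≤ d + 1 := by
  have hf0 : f ≠ 0 := by
    rintro rfl
    exact hp.ne_top (by simp [← hfp, Ideal.eq_top_iff_one])
  have hedge : pathVar K n 0 * pathVar K n 1 ∈ p := by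
    refine hp.mem_of_pow_mem k (hfp ▸ Ideal.mem_colon_span_singleton.mpr ?_)
    exact Ideal.mul_mem_right _ _ (Ideal.pow_mem_pow (pathVar_mul_pathVar_succ_mem 0) k)
  have hdeg : pathIdeal K n ^ k ≤ weightOrderIdeal 1 (2 * k) :=
    pow_le_weightOrderIdeal (pathIdeal_le_weightOrderIdeal fun _ _ => le_rfl) k
  obtain ⟨i, hi⟩ : ∃ i : Fin n, X i ∈ p := by
    rcases hp.mem_or_mem hedge with h | h
    · exact ⟨⟨0, by omega⟩, by simpa [pathVar, show 0 < n by omega] using h⟩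
    · exact ⟨⟨1, by omega⟩, by simpa [pathVar, show 1 < n by omega] using h⟩
  rw [← hfp, Ideal.mem_colon_span_singleton] at hi
  exact le_add_one_of_X_mul_mem hdeg hf hf0 hi

/-- `hcover` says that the segment `x_a ⋯ x_{a+2m}` reaches every odd vertex. -/
theorem vNumber_pathIdeal_pow {k a m : ℕ} (hn : 2 ≤ n) (ha : a % 2 = 0) (ha₂ : a ≤ 2)
    (hmk : m < k) (hseg : a + 2 * m < n) (hcover : n ≤ a + 2 * m + 3) :
    vNumber (pathIdeal K n ^ k) = 2 * k - 1 := by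
  obtain ⟨μ, hfμ, hdeg, hodd⟩ : ∃ μ,
      pathMonomial K n 0 2 ^ (k - 1 - m) * pathMonomial K n a (2 * m + 1) = monomial μ 1 ∧
        μ.degree = 2 * k - 1 ∧ Finsupp.weight (fun j : Fin n => j.val % 2) μ = k - 1 := by
    obtain ⟨μ₁, h₁, hdeg₁, hodd₁⟩ := exists_pathMonomial_eq_monomial (R := K) (a := 0) (l := 2) hn
    obtain ⟨μ₂, h₂, hdeg₂, hodd₂⟩ :=
      exists_pathMonomial_eq_monomial (R := K) (by omega : a + (2 * m + 1) ≤ n)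
    refine ⟨(k - 1 - m) • μ₁ + μ₂, ?_, ?_, ?_⟩
    · rw [h₁, h₂, monomial_pow, one_pow, monomial_mul, one_mul]
    · rw [map_add, map_nsmul, hdeg₁, hdeg₂, smul_eq_mul]
      omega
    · rw [map_add, map_nsmul, hodd₁, hodd₂, smul_eq_mul]
      omega
  set f := pathMonomial K n 0 2 ^ (k - 1 - m) * pathMonomial K n a (2 * m + 1)
  have hX : ∀ j : Fin n, j.val % 2 = 1 → X j * f ∈ pathIdeal K n ^ k := by
    intro j hj
    have hXj : X j = pathVar K n j := by simp [pathVar]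
    have hsplit : pathIdeal K n ^ k = pathIdeal K n ^ (k - 1 - m) * pathIdeal K n ^ (m + 1) := by
      rw [← pow_add]
      congr 1
      omega
    rw [hXj, mul_left_comm, hsplit]
    refine Ideal.mul_mem_mul (Ideal.pow_mem_pow ?_ _)
      (pathVar_mul_pathMonomial_mem_pow_of_odd ha ha₂ hj (by omega))
    simpa using pathMonomial_two_mul_mem_pow (R := K) (n := n) 0 1
  have hcolon : (pathIdeal K n ^ k).colon (Ideal.span {f}) =
      Ideal.span (X '' {j : Fin n | j.val % 2 = 1}) := by
    rw [hfμ]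
    refine colon_monomial_eq_span_X_image (w := fun j : Fin n => j.val % 2) (k := k) ?_ ?_ ?_
      (fun j hj => hfμ ▸ hX j hj)
    · intro j hj
      simp only [Set.mem_ofPred_eq] at hj
      omega
    · simpa using pow_le_weightOrderIdeal (R := K)
        (pathIdeal_le_weightOrderIdeal (w := fun j : Fin n => j.val % 2) (c := 1)
        fun i _ => by dsimp only; omega) k
    · omega
  refine IsLeast.csInf_eq ⟨⟨f, _, mem_Ass_of_colon_eq (isPrime_span_X_image _) hcolon,
    hfμ ▸ isHomogeneous_monomial _ hdeg, hcolon⟩, ?_⟩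
  rintro d ⟨g, p, hp, hg, hgp⟩
  have := two_mul_le_of_colon_pathIdeal_pow_eq hn hp.1 hg hgp
  omega

end VNumber

theorem stmt15 {K : Type*} [Field K] {n : ℕ} (hn : 2 ≤ n)
    (I : Ideal (MvPolynomial (Fin n) K))
    (hI : I = Ideal.span {f | ∃ (i : ℕ) (h : i + 1 < n),
      f = (X (⟨i, by omega⟩ : Fin n) : MvPolynomial (Fin n) K) * X (⟨i + 1, h⟩ : Fin n)}) :
    ∀ k : ℕ, 1 ≤ k → n / 2 - 1 ≤ k → (vNumber (I ^ k) : ℤ) = 2 * k - 1 := by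
  intro k hk hkn
  have hv : vNumber (pathIdeal K n ^ k) = 2 * k - 1 := by
    rcases lt_or_ge n 4 with hn₄ | hn₄
    · exact vNumber_pathIdeal_pow (a := 0) (m := 0) hn rfl (by norm_num) hk (by omega) (by omega)
    · exact vNumber_pathIdeal_pow (a := 2) (m := n / 2 - 2) hn rfl le_rfl (by omega) (by omega)
        (by omega)
  rw [hI, ← pathIdeal, hv]
  omega
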